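/- Let G be a k-regular graph on n vertices with n odd, k even, and k ≥ 3 (hence k ≥ 4). If G admits a 2-coloring under which strictly more than half of the vertices are under strict majority illusion, then n ≥ (3k+2)/(k−2). -/

import Mathlib

open Finset

variable {V : Type*} [Fintype V] [DecidableEq V]

/-- The strict majority color of a finite set of agents (`true` = red, `false` = blue),
or `none` in case of a tie. -/
def maj (c : V → Bool) (s : Finset V) : Option Bool :=
  if 2 * (s.filter fun v => c v = true).card > s.card then some true
  else if 2 * (s.filter fun v => c v = false).card > s.card then some false
  else none

/-- Vertex `i` is under weak-majority illusion: the majority winner (possibly a tie)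
of its neighborhood differs from the global one. -/
def weakIll (G : SimpleGraph V) [DecidableRel G.Adj] (c : V → Bool) (i : V) : Prop :=
  maj c (G.neighborFinset i) ≠ maj c Finset.univ

/-- Vertex `i` is under strict majority illusion: neither its neighborhood nor the whole
graph is tied, and their majority winners differ. -/
def strictIll (G : SimpleGraph V) [DecidableRel G.Adj] (c : V → Bool) (i : V) : Prop :=
  maj c (G.neighborFinset i) ≠ none ∧ maj c Finset.univ ≠ none ∧
    maj c (G.neighborFinset i) ≠ maj c Finset.univ

instance (G : SimpleGraph V) [DecidableRel G.Adj] (c : V → Bool) :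
    DecidablePred (weakIll G c) := fun _ => by unfold weakIll; infer_instance

instance (G : SimpleGraph V) [DecidableRel G.Adj] (c : V → Bool) :
    DecidablePred (strictIll G c) := fun _ => by unfold strictIll; infer_instance

/-! Let `b` be the global majority colour and `B` the minority class, so `2|B| ≤ n - 1`.
Every vertex under illusion has a strict majority of its `k` neighbours in `B`, hence, as `k` is
even, at least `k/2 + 1` of them. Double counting the edges between the illusioned vertices `I`
and `B` in the `k`-regular graph gives `|I| (k/2 + 1) ≤ k |B|`; with `2|I| ≥ n + 1` this yields
`(n + 1)(k + 2) ≤ 2k(n - 1)`, i.e. `n (k - 2) ≥ 3k + 2`. -/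

lemma card_filter_eq_add_card_filter_eq_not {α : Type*} (c : α → Bool) (s : Finset α)
    (b : Bool) : #{v ∈ s | c v = b} + #{v ∈ s | c v = !b} = #s := by
  simpa only [Bool.eq_not_iff] using card_filter_add_card_filter_not (fun v => c v = b)

lemma maj_eq_some_iff {α : Type*} {c : α → Bool} {s : Finset α} {b : Bool} :
    maj c s = some b ↔ #s < 2 * #{v ∈ s | c v = b} := by
  have := card_filter_eq_add_card_filter_eq_not c s true
  unfold maj
  cases b <;> split_ifs <;> simp_all; omega

lemma two_mul_card_filter_eq_not_lt_of_maj_eq_some {α : Type*} {c : α → Bool} {s : Finset α}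
    {b : Bool} (h : maj c s = some b) : 2 * #{v ∈ s | c v = !b} < #s := by
  have := card_filter_eq_add_card_filter_eq_not c s b
  have := maj_eq_some_iff.mp h
  omega

lemma strictIll.maj_neighborFinset_eq_not {α : Type*} [Fintype α] {G : SimpleGraph α}
    [DecidableRel G.Adj] {c : α → Bool} {i : α} {b : Bool} (h : strictIll G c i)
    (hb : maj c univ = some b) :
    maj c (G.neighborFinset i) = some (!b) := by
  obtain ⟨hne, -, hdiff⟩ := h
  obtain ⟨b', hb'⟩ := Option.ne_none_iff_exists'.mp hne
  rw [hb', hb, ne_eq, Option.some_inj] at hdiff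
  rw [hb', Bool.eq_not_iff.mpr hdiff]

lemma SimpleGraph.IsRegularOfDegree.card_mul_le_card_mul {α : Type*} [Fintype α]
    {G : SimpleGraph α} [DecidableRel G.Adj] {k m : ℕ} (hreg : G.IsRegularOfDegree k)
    {I B : Finset α} (hI : ∀ i ∈ I, m ≤ #{v ∈ B | G.Adj i v}) : #I * m ≤ #B * k := by
  refine card_nsmul_le_card_nsmul G.Adj hI fun v _ => ?_
  calc #(I.bipartiteBelow G.Adj v) ≤ #(G.neighborFinset v) :=
        card_le_card fun i hi => (G.mem_neighborFinset v i).mpr (mem_filter.mp hi).2.symm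
    _ = k := hreg v

theorem regular_odd_even_majority_majority_bound_general (G : SimpleGraph V) [DecidableRel G.Adj]
    (k : ℕ) (hreg : ∀ v : V, G.degree v = k)
    (hk : Even k) (hk3 : 3 ≤ k)
    (h : ∃ c : V → Bool,
      2 * (Finset.univ.filter fun i => strictIll G c i).card > Fintype.card V) :
    (Fintype.card V : ℚ) ≥ (3 * k + 2) / (k - 2) := by
  obtain ⟨c, hI⟩ := h
  set n := Fintype.card V
  set I := univ.filter fun i => strictIll G c i
  obtain ⟨i₀, hi₀⟩ : I.Nonempty := card_pos.mp (by omega)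
  obtain ⟨b, hb⟩ := Option.ne_none_iff_exists'.mp (mem_filter.mp hi₀).2.2.1
  set B := univ.filter fun v => c v = !b
  have hB : 2 * #B < n := two_mul_card_filter_eq_not_lt_of_maj_eq_some hb
  have hcount : #I * (k / 2 + 1) ≤ #B * k := by
    refine SimpleGraph.IsRegularOfDegree.card_mul_le_card_mul hreg fun i hi => ?_
    have hmaj := maj_eq_some_iff.mp ((mem_filter.mp hi).2.maj_neighborFinset_eq_not hb)
    have hN : {v ∈ G.neighborFinset i | c v = !b} = {v ∈ B | G.Adj i v} := by
      ext v; simp [B, and_comm]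
    rw [G.card_neighborFinset_eq_degree, hreg, hN] at hmaj
    omega
  obtain ⟨r, rfl⟩ := hk
  have hnat : 3 * (r + r) + 2 + 2 * n ≤ (r + r) * n := by
    rw [show (r + r) / 2 = r by omega] at hcount
    nlinarith
  have hr : (3 : ℚ) ≤ r + r := by exact_mod_cast hk3
  have hq : (3 * (r + r) + 2 + 2 * n : ℚ) ≤ (r + r) * n := by exact_mod_cast hnat
  push_cast
  rw [ge_iff_le, div_le_iff₀ (by linarith)]
  linarith

theorem regular_odd_even_majority_majority_bound (G : SimpleGraph V) [DecidableRel G.Adj]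
    (k : ℕ) (hreg : ∀ v : V, G.degree v = k)
    (hn : Odd (Fintype.card V)) (hk : Even k) (hk3 : 3 ≤ k)
    (h : ∃ c : V → Bool,
      2 * (Finset.univ.filter fun i => strictIll G c i).card > Fintype.card V) :
    (Fintype.card V : ℚ) ≥ (3 * k + 2) / (k - 2) :=
  regular_odd_even_majority_majority_bound_general G k hreg hk hk3 h
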